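/- (Example 3.4, deformation to all orders.) Let q ∈ ℂ be nonzero and not a root of unity. For i ≥ 1 let Ψ^{(i)} : A_q⊗B → B⊗A_q be the ℂ-linear map determined by Ψ^{(i)}(a^kā^l ⊗ b^r) = q^{lr}·[k]_q[k−1]_q⋯[k−i+1]_q·binom(r+i−1, i)_q·b^{r+i}⊗a^{k−i}ā^{l+i} for i ≤ k and Ψ^{(i)}(a^kā^l ⊗ b^r) = 0 for i > k, and set Ψ^{(0)} = Ψ_0. Then for every m ≥ 1: Ψ^{(m)}∘(μ_{A_q}⊗id_B) = Σ_{i+j=m, i,j≥0} (id_B⊗μ_{A_q})∘(Ψ^{(i)}⊗id_{A_q})∘(id_{A_q}⊗Ψ^{(j)}) and Ψ^{(m)}∘(id_{A_q}⊗μ_B) = Σ_{i+j=m, i,j≥0} (μ_B⊗id_{A_q})∘(id_B⊗Ψ^{(i)})∘(Ψ^{(j)}⊗id_B); that is, all obstructions vanish and Ψ_t = Σ_i t^iΨ^{(i)} defines a deformation of the factorisation to all orders in t. -/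

import Mathlib

/-!
STATEMENT 12 (Example 3.4, deformation to all orders): the maps
`Ψ⁽ⁱ⁾(a^k ā^l ⊗ b^r) = q^{lr}·[k][k−1]⋯[k−i+1]·binom(r+i−1, i)_q·b^{r+i} ⊗ a^{k−i} ā^{l+i}`
(zero when `i > k`) extend the infinitesimal deformation to all orders:
all obstructions vanish, i.e. for every `m ≥ 1`,
`Ψ⁽ᵐ⁾∘(μ_A⊗id) = Σ_{i+j=m}(id⊗μ_A)∘(Ψ⁽ⁱ⁾⊗id)∘(id⊗Ψ⁽ʲ⁾)` and
`Ψ⁽ᵐ⁾∘(id⊗μ_B) = Σ_{i+j=m}(μ_B⊗id)∘(id⊗Ψ⁽ⁱ⁾)∘(Ψ⁽ʲ⁾⊗id)`,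
so `Ψ_t = Σ_i t^i Ψ⁽ⁱ⁾` is a deformation of the factorisation to all orders.
-/
open TensorProduct

section Defs

variable {k : Type*} [CommRing k]
variable {A B : Type*} [AddCommGroup A] [Module k A] [AddCommGroup B] [Module k B]

/-- `(id_B ⊗ μ) ∘ (ψ ⊗ id_A)` as a map `A ⊗ (B ⊗ A) → B ⊗ A`. -/
noncomputable def twL (μ : A ⊗[k] A →ₗ[k] A) (ψ : A ⊗[k] B →ₗ[k] B ⊗[k] A) :
    A ⊗[k] (B ⊗[k] A) →ₗ[k] B ⊗[k] A :=
  LinearMap.lTensor B μ ∘ₗ (TensorProduct.assoc k B A A).toLinearMap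
    ∘ₗ LinearMap.rTensor A ψ ∘ₗ (TensorProduct.assoc k A B A).symm.toLinearMap

/-- `(ν ⊗ id_A) ∘ (id_B ⊗ ψ)` as a map `(B ⊗ A) ⊗ B → B ⊗ A`. -/
noncomputable def twR (ν : B ⊗[k] B →ₗ[k] B) (ψ : A ⊗[k] B →ₗ[k] B ⊗[k] A) :
    (B ⊗[k] A) ⊗[k] B →ₗ[k] B ⊗[k] A :=
  LinearMap.rTensor A ν ∘ₗ (TensorProduct.assoc k B B A).symm.toLinearMap
    ∘ₗ LinearMap.lTensor B ψ ∘ₗ (TensorProduct.assoc k B A B).toLinearMap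

end Defs

/-- The underlying module of the algebra `A_q`: the free `ℂ`-module with basis
`{a^k ā^l : (k,l) ∈ ℕ × ℕ}`, a basis element being `Finsupp.single (k,l) 1`. -/
abbrev Aq : Type := (ℕ × ℕ) →₀ ℂ

/-- `B = ℂ[b]`, the polynomial algebra, with basis `{b^r = Finsupp.single r 1}`. -/
abbrev Bpoly : Type := AddMonoidAlgebra ℂ ℕ

/-- The multiplication of `A_q`: `(a^k ā^l)·(a^r ā^s) = q^{lr}·a^{k+r} ā^{l+s}`,
as a bilinear map. -/
noncomputable def muq (q : ℂ) : Aq →ₗ[ℂ] Aq →ₗ[ℂ] Aq :=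
  Finsupp.lift (Aq →ₗ[ℂ] Aq) ℂ (ℕ × ℕ) fun p =>
    Finsupp.lift Aq ℂ (ℕ × ℕ) fun p' =>
      (q ^ (p.2 * p'.1)) • Finsupp.single (p.1 + p'.1, p.2 + p'.2) (1 : ℂ)

/-- The map `Ψ₀ : A_q ⊗ B → B ⊗ A_q`, `a^k ā^l ⊗ b^r ↦ q^{lr}·b^r ⊗ a^k ā^l`. -/
noncomputable def psiq0 (q : ℂ) : Aq ⊗[ℂ] Bpoly →ₗ[ℂ] Bpoly ⊗[ℂ] Aq :=
  TensorProduct.lift <|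
    Finsupp.lift (Bpoly →ₗ[ℂ] Bpoly ⊗[ℂ] Aq) ℂ (ℕ × ℕ) fun p =>
      Finsupp.lift (Bpoly ⊗[ℂ] Aq) ℂ ℕ (fun r =>
        (q ^ (p.2 * r)) •
          ((AddMonoidAlgebra.single r (1 : ℂ) : Bpoly) ⊗ₜ[ℂ] (Finsupp.single p (1 : ℂ) : Aq)))
          ∘ₗ (AddMonoidAlgebra.coeffLinearEquiv ℂ).toLinearMap


/-- The `q`-integer `[m]_q = 1 + q + ⋯ + q^{m−1}`. -/
noncomputable def qint (q : ℂ) (m : ℕ) : ℂ := ∑ i ∈ Finset.range m, q ^ i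

/-- The Gaussian (`q`-)binomial coefficient `binom(m, i)_q` (the value at `q`
of the Gaussian binomial polynomial), via the `q`-Pascal recursion
`binom(m+1, i+1)_q = binom(m, i)_q + q^{i+1}·binom(m, i+1)_q`. -/
noncomputable def qbinom (q : ℂ) : ℕ → ℕ → ℂ
  | _, 0 => 1
  | 0, _ + 1 => 0
  | m + 1, i + 1 => qbinom q m i + q ^ (i + 1) * qbinom q m (i + 1)

/-- The family `Ψ⁽ⁱ⁾ : A_q ⊗ B → B ⊗ A_q`; `Ψ⁽⁰⁾ = Ψ₀` and for `i ≥ 1`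
`Ψ⁽ⁱ⁾(a^k ā^l ⊗ b^r) = q^{lr}·[k][k−1]⋯[k−i+1]·binom(r+i−1, i)_q·b^{r+i} ⊗ a^{k−i} ā^{l+i}`
(the coefficient `[k][k−1]⋯[k−i+1] = ∏_{j<i}[k−j]_q` vanishes when `i > k`). -/
noncomputable def psiqFam (q : ℂ) : ℕ → (Aq ⊗[ℂ] Bpoly →ₗ[ℂ] Bpoly ⊗[ℂ] Aq)
  | 0 => psiq0 q
  | i + 1 =>
    TensorProduct.lift <|
      Finsupp.lift (Bpoly →ₗ[ℂ] Bpoly ⊗[ℂ] Aq) ℂ (ℕ × ℕ) fun p =>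
        Finsupp.lift (Bpoly ⊗[ℂ] Aq) ℂ ℕ (fun r =>
          (q ^ (p.2 * r) * (∏ j ∈ Finset.range (i + 1), qint q (p.1 - j))
              * qbinom q (r + i) (i + 1)) •
            ((AddMonoidAlgebra.single (r + (i + 1)) (1 : ℂ) : Bpoly)
              ⊗ₜ[ℂ] (Finsupp.single (p.1 - (i + 1), p.2 + (i + 1)) (1 : ℂ) : Aq)))
            ∘ₗ (AddMonoidAlgebra.coeffLinearEquiv ℂ).toLinearMap

/-! On monomials, `Ψ⁽ⁱ⁾(a^k ā^l ⊗ b^r) = c_i(k,l,r) · b^{r+i} ⊗ a^{k-i} ā^{l+i}`, so both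
identities reduce to identities between the scalars `c_i`. Rewriting
`c_i(k,l,r) = q^{lr} [k]⋯[k-i+1] · binom(r+i-1, i)_q = q^{lr} binom(k, i)_q · [r]⋯[r+i-1]`,
the first becomes the `q`-Vandermonde identity for `binom(k+k', m)_q` (the rising products
`[r]⋯[r+i-1]` simply concatenate), and the second, after concatenating the falling products
`[k]⋯[k-i+1]`, the `q`-Vandermonde identity for the multiset coefficients `binom(r+s+m-1, m)_q`.
Both Vandermonde identities follow from `q`-Pascal by induction. -/

open Finset

section QCombinatorics

variable (q : ℂ)

lemma qint_add (a b : ℕ) : qint q (a + b) = qint q a + q ^ a * qint q b := by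
  simp only [qint, sum_range_add, pow_add, mul_sum]

lemma qbinom_zero_succ (i : ℕ) : qbinom q 0 (i + 1) = 0 := rfl

lemma qbinom_succ_succ (n i : ℕ) :
    qbinom q (n + 1) (i + 1) = qbinom q n i + q ^ (i + 1) * qbinom q n (i + 1) := rfl

@[simp] lemma qbinom_zero_right (n : ℕ) : qbinom q n 0 = 1 := by
  cases n <;> rfl

lemma qbinom_eq_zero_of_lt {n i : ℕ} (h : n < i) : qbinom q n i = 0 := by
  induction n generalizing i with
  | zero => obtain ⟨i, rfl⟩ := Nat.exists_eq_add_of_lt h; rfl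
  | succ n ih =>
    obtain ⟨i, rfl⟩ : ∃ j, i = j + 1 := ⟨i - 1, by omega⟩
    rw [qbinom_succ_succ, ih (by omega), ih (by omega), mul_zero, add_zero]

noncomputable def qFactorial (n : ℕ) : ℂ := ∏ j ∈ range n, qint q (j + 1)

noncomputable def qDescFactorial (n i : ℕ) : ℂ := ∏ j ∈ range i, qint q (n - j)

noncomputable def qAscFactorial (r i : ℕ) : ℂ := ∏ j ∈ range i, qint q (r + j)

noncomputable def qmultichoose (r i : ℕ) : ℂ := qbinom q (r + i - 1) i

lemma qDescFactorial_add (n i j : ℕ) :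
    qDescFactorial q n (i + j) = qDescFactorial q n i * qDescFactorial q (n - i) j := by
  simp only [qDescFactorial, prod_range_add, Nat.sub_sub]

lemma qDescFactorial_eq_zero_of_lt {n i : ℕ} (h : n < i) : qDescFactorial q n i = 0 :=
  prod_eq_zero (mem_range.2 h) (by simp [qint])

lemma qDescFactorial_succ (n i : ℕ) :
    qDescFactorial q n (i + 1) = qDescFactorial q n i * qint q (n - i) :=
  prod_range_succ _ _

lemma qDescFactorial_succ_succ (n i : ℕ) :
    qDescFactorial q (n + 1) (i + 1) = qDescFactorial q n i * qint q (n + 1) := by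
  simp only [qDescFactorial, prod_range_succ', Nat.sub_zero, Nat.add_sub_add_right]

lemma qFactorial_succ (n : ℕ) : qFactorial q (n + 1) = qFactorial q n * qint q (n + 1) :=
  prod_range_succ _ _

lemma qDescFactorial_eq_qbinom_mul (n i : ℕ) :
    qDescFactorial q n i = qbinom q n i * qFactorial q i := by
  induction n generalizing i with
  | zero =>
    rcases i with _ | i
    · simp [qDescFactorial, qFactorial]
    · rw [qDescFactorial_eq_zero_of_lt q (Nat.succ_pos i), qbinom_zero_succ, zero_mul]
  | succ n ih =>
    rcases i with _ | i
    · simp [qDescFactorial, qFactorial]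
    rw [qDescFactorial_succ_succ, qbinom_succ_succ, qFactorial_succ]
    rcases le_or_gt i n with hin | hni
    · obtain ⟨e, rfl⟩ := Nat.exists_eq_add_of_le hin
      have hint : qint q (i + e + 1) = qint q (i + 1) + q ^ (i + 1) * qint q e := by
        rw [add_right_comm, qint_add]
      have hstep := qDescFactorial_succ q (i + e) i
      rw [Nat.add_sub_cancel_left] at hstep
      linear_combination qDescFactorial q (i + e) i * hint + qint q (i + 1) * ih i
        - q ^ (i + 1) * hstep + q ^ (i + 1) * ih (i + 1)
        + q ^ (i + 1) * qbinom q (i + e) (i + 1) * qFactorial_succ q i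
    · rw [qDescFactorial_eq_zero_of_lt q hni, qbinom_eq_zero_of_lt q hni,
        qbinom_eq_zero_of_lt q (by omega : n < i + 1)]
      ring

lemma qAscFactorial_add (r i j : ℕ) :
    qAscFactorial q r (i + j) = qAscFactorial q r i * qAscFactorial q (r + i) j := by
  simp only [qAscFactorial, prod_range_add, add_assoc]

lemma qAscFactorial_eq_qmultichoose_mul (r i : ℕ) :
    qAscFactorial q r i = qmultichoose q r i * qFactorial q i := by
  rcases r with _ | r
  · rcases i with _ | i
    · simp [qAscFactorial, qmultichoose, qFactorial]
    · rw [qmultichoose, qbinom_eq_zero_of_lt q (by omega), zero_mul, qAscFactorial,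
        prod_range_succ', zero_add, qint, sum_range_zero, mul_zero]
  · rw [qmultichoose, Nat.add_right_comm, Nat.add_sub_cancel, ← qDescFactorial_eq_qbinom_mul,
      qDescFactorial, qAscFactorial, ← prod_range_reflect]
    refine prod_congr rfl fun j hj => ?_
    rw [mem_range] at hj
    congr 1
    omega

lemma qmultichoose_zero_right (r : ℕ) : qmultichoose q r 0 = 1 := qbinom_zero_right q _

lemma qmultichoose_zero_succ (i : ℕ) : qmultichoose q 0 (i + 1) = 0 :=
  qbinom_eq_zero_of_lt q (by omega)

lemma qmultichoose_succ_succ (r i : ℕ) :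
    qmultichoose q (r + 1) (i + 1)
      = qmultichoose q (r + 1) i + q ^ (i + 1) * qmultichoose q r (i + 1) := by
  simp only [qmultichoose, Nat.add_sub_cancel, show r + 1 + (i + 1) - 1 = r + i + 1 by omega,
    show r + (i + 1) - 1 = r + i by omega, show r + 1 + i = r + i + 1 by omega]
  exact qbinom_succ_succ q _ _

theorem qbinom_vandermonde (k k' m : ℕ) :
    ∑ p ∈ antidiagonal m, q ^ (p.1 * (k' - p.2)) * qbinom q k p.1 * qbinom q k' p.2
      = qbinom q (k + k') m := by
  induction k' generalizing m with
  | zero =>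
    rcases m with _ | m
    · simp
    simp [Nat.sum_antidiagonal_succ', qbinom_zero_succ]
  | succ k' ih =>
    rcases m with _ | m
    · simp
    have hterm : ∀ p ∈ antidiagonal m,
        q ^ (p.1 * (k' + 1 - (p.2 + 1))) * qbinom q k p.1 * qbinom q (k' + 1) (p.2 + 1)
          = q ^ (p.1 * (k' - p.2)) * qbinom q k p.1 * qbinom q k' p.2
            + q ^ (m + 1) * (q ^ (p.1 * (k' - (p.2 + 1))) * qbinom q k p.1
              * qbinom q k' (p.2 + 1)) := by
      intro p hp
      rw [HasAntidiagonal.mem_antidiagonal] at hp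
      rw [qbinom_succ_succ, Nat.add_sub_add_right]
      rcases le_or_gt (p.2 + 1) k' with hle | hlt
      · obtain ⟨e, he⟩ := Nat.exists_eq_add_of_le hle
        rw [he, show p.2 + 1 + e - p.2 = e + 1 by omega, Nat.add_sub_cancel_left, ← hp]
        ring
      · rw [qbinom_eq_zero_of_lt q hlt]
        ring
    rw [Nat.sum_antidiagonal_succ', sum_congr rfl hterm, sum_add_distrib, ← mul_sum,
      ← add_assoc k, qbinom_succ_succ, ← ih, ← ih, Nat.sum_antidiagonal_succ' (n := m)]
    simp only [Nat.sub_zero, qbinom_zero_right]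
    ring

theorem qmultichoose_vandermonde (r s m : ℕ) :
    ∑ p ∈ antidiagonal m, q ^ (p.2 * s) * qmultichoose q s p.1 * qmultichoose q r p.2
      = qmultichoose q (r + s) m := by
  induction s generalizing m with
  | zero =>
    rcases m with _ | m
    · simp [qmultichoose_zero_right]
    simp [Nat.sum_antidiagonal_succ, qmultichoose_zero_right, qmultichoose_zero_succ]
  | succ s ihs =>
    induction m with
    | zero => simp [qmultichoose_zero_right]
    | succ m ihm =>
      have hterm : ∀ p ∈ antidiagonal m,
          q ^ (p.2 * (s + 1)) * qmultichoose q (s + 1) (p.1 + 1) * qmultichoose q r p.2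
            = q ^ (p.2 * (s + 1)) * qmultichoose q (s + 1) p.1 * qmultichoose q r p.2
              + q ^ (m + 1) * (q ^ (p.2 * s) * qmultichoose q s (p.1 + 1)
                * qmultichoose q r p.2) := by
        intro p hp
        rw [HasAntidiagonal.mem_antidiagonal] at hp
        rw [qmultichoose_succ_succ, ← hp]
        ring
      rw [Nat.sum_antidiagonal_succ, sum_congr rfl hterm, sum_add_distrib, ← mul_sum, ihm,
        ← add_assoc r, qmultichoose_succ_succ, ← ihs, Nat.sum_antidiagonal_succ (n := m)]
      simp only [qmultichoose_zero_right]
      ring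

end QCombinatorics

section Twisting

variable (q : ℂ)

local notation "𝔞[" k ", " l "]" => (Finsupp.single (k, l) (1 : ℂ) : Aq)
local notation "𝔟[" r "]" => (AddMonoidAlgebra.single r (1 : ℂ) : Bpoly)

noncomputable def psiCoeff (i k l r : ℕ) : ℂ :=
  q ^ (l * r) * qDescFactorial q k i * qmultichoose q r i

lemma psiCoeff_eq_zero_of_lt {i k : ℕ} (h : k < i) (l r : ℕ) : psiCoeff q i k l r = 0 := by
  rw [psiCoeff, qDescFactorial_eq_zero_of_lt q h, mul_zero, zero_mul]

lemma psiCoeff_eq_qbinom_mul_qAscFactorial (i k l r : ℕ) :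
    psiCoeff q i k l r = q ^ (l * r) * qbinom q k i * qAscFactorial q r i := by
  rw [psiCoeff, qDescFactorial_eq_qbinom_mul, qAscFactorial_eq_qmultichoose_mul]
  ring

theorem sum_psiCoeff_mul_psiCoeff_mul_pow (k l k' l' r m : ℕ) :
    ∑ p ∈ antidiagonal m,
        psiCoeff q p.2 k' l' r * psiCoeff q p.1 k l (r + p.2) * q ^ ((l + p.1) * (k' - p.2))
      = q ^ (l * k') * psiCoeff q m (k + k') (l + l') r := by
  have hterm : ∀ p ∈ antidiagonal m,
      psiCoeff q p.2 k' l' r * psiCoeff q p.1 k l (r + p.2) * q ^ ((l + p.1) * (k' - p.2))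
        = q ^ (l * k' + (l + l') * r) * qAscFactorial q r m
          * (q ^ (p.1 * (k' - p.2)) * qbinom q k p.1 * qbinom q k' p.2) := by
    intro p hp
    rw [HasAntidiagonal.mem_antidiagonal] at hp
    rw [psiCoeff_eq_qbinom_mul_qAscFactorial, psiCoeff_eq_qbinom_mul_qAscFactorial, ← hp,
      add_comm p.1, qAscFactorial_add]
    rcases le_or_gt p.2 k' with hle | hlt
    · obtain ⟨e, rfl⟩ := Nat.exists_eq_add_of_le hle
      rw [Nat.add_sub_cancel_left]
      ring
    · rw [qbinom_eq_zero_of_lt q hlt]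
      ring
  rw [sum_congr rfl hterm, ← mul_sum, qbinom_vandermonde, psiCoeff_eq_qbinom_mul_qAscFactorial]
  ring

theorem sum_psiCoeff_mul_psiCoeff (k l r s m : ℕ) :
    ∑ p ∈ antidiagonal m, psiCoeff q p.2 k l r * psiCoeff q p.1 (k - p.2) (l + p.2) s
      = psiCoeff q m k l (r + s) := by
  have hterm : ∀ p ∈ antidiagonal m,
      psiCoeff q p.2 k l r * psiCoeff q p.1 (k - p.2) (l + p.2) s
        = q ^ (l * (r + s)) * qDescFactorial q k m
          * (q ^ (p.2 * s) * qmultichoose q s p.1 * qmultichoose q r p.2) := by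
    intro p hp
    rw [HasAntidiagonal.mem_antidiagonal] at hp
    rw [psiCoeff, psiCoeff, ← hp, add_comm p.1, qDescFactorial_add]
    ring
  rw [sum_congr rfl hterm, ← mul_sum, qmultichoose_vandermonde, psiCoeff]

lemma muq_single_single (k l k' l' : ℕ) :
    muq q 𝔞[k, l] 𝔞[k', l'] = q ^ (l * k') • 𝔞[k + k', l + l'] := by
  rw [muq, Finsupp.lift_apply, Finsupp.sum_single_index (by simp), one_smul,
    Finsupp.lift_apply, Finsupp.sum_single_index (by simp), one_smul]

lemma psiqFam_single_tmul_single (i k l r : ℕ) :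
    psiqFam q i (𝔞[k, l] ⊗ₜ 𝔟[r]) = psiCoeff q i k l r • (𝔟[r + i] ⊗ₜ 𝔞[k - i, l + i]) := by
  have hsingle : ∀ f : ℕ → Bpoly ⊗[ℂ] Aq, (Finsupp.lift (Bpoly ⊗[ℂ] Aq) ℂ ℕ f
      ∘ₗ (AddMonoidAlgebra.coeffLinearEquiv ℂ).toLinearMap) 𝔟[r] = f r := by
    intro f
    rw [LinearMap.comp_apply, LinearEquiv.coe_coe, AddMonoidAlgebra.coeffLinearEquiv_apply,
      AddMonoidAlgebra.coeff_single, Finsupp.lift_apply, Finsupp.sum_single_index (by simp),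
      one_smul]
  rcases i with _ | i
  · rw [psiqFam, psiq0, lift.tmul, Finsupp.lift_apply, Finsupp.sum_single_index (by simp),
      one_smul, hsingle, psiCoeff, qDescFactorial, qmultichoose_zero_right]
    simp
  · rw [psiqFam, lift.tmul, Finsupp.lift_apply, Finsupp.sum_single_index (by simp),
      one_smul, hsingle, psiCoeff, qDescFactorial, qmultichoose, Nat.add_sub_assoc le_add_self,
      Nat.add_sub_cancel]

lemma twL_single_tmul (i k l s k' l' : ℕ) :
    twL (lift (muq q)) (psiqFam q i) (𝔞[k, l] ⊗ₜ (𝔟[s] ⊗ₜ 𝔞[k', l']))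
      = (psiCoeff q i k l s * q ^ ((l + i) * k')) • (𝔟[s + i] ⊗ₜ 𝔞[k - i + k', l + i + l']) := by
  simp only [twL, LinearMap.coe_comp, Function.comp_apply, LinearEquiv.coe_coe, assoc_symm_tmul,
    LinearMap.rTensor_tmul, psiqFam_single_tmul_single, smul_tmul', assoc_tmul,
    LinearMap.lTensor_tmul, lift.tmul, muq_single_single, tmul_smul, smul_smul, mul_comm]

lemma twR_tmul_single (i s k l r : ℕ) :
    twR (LinearMap.mul' ℂ Bpoly) (psiqFam q i) ((𝔟[s] ⊗ₜ 𝔞[k, l]) ⊗ₜ 𝔟[r])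
      = psiCoeff q i k l r • (𝔟[s + (r + i)] ⊗ₜ 𝔞[k - i, l + i]) := by
  simp only [twR, LinearMap.coe_comp, Function.comp_apply, LinearEquiv.coe_coe, assoc_tmul,
    LinearMap.lTensor_tmul, psiqFam_single_tmul_single, tmul_smul, map_smul, assoc_symm_tmul,
    LinearMap.rTensor_tmul, LinearMap.mul'_apply, AddMonoidAlgebra.single_mul_single, mul_one]

lemma psiqFam_muq_single_tmul_single (m k l k' l' r : ℕ) :
    psiqFam q m (muq q 𝔞[k, l] 𝔞[k', l'] ⊗ₜ 𝔟[r])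
      = ∑ p ∈ antidiagonal m,
          twL (lift (muq q)) (psiqFam q p.1) (𝔞[k, l] ⊗ₜ psiqFam q p.2 (𝔞[k', l'] ⊗ₜ 𝔟[r])) := by
  have hterm : ∀ p ∈ antidiagonal m,
      twL (lift (muq q)) (psiqFam q p.1) (𝔞[k, l] ⊗ₜ psiqFam q p.2 (𝔞[k', l'] ⊗ₜ 𝔟[r]))
        = (psiCoeff q p.2 k' l' r * psiCoeff q p.1 k l (r + p.2) * q ^ ((l + p.1) * (k' - p.2)))
          • (𝔟[r + m] ⊗ₜ 𝔞[k + k' - m, l + l' + m]) := by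
    intro p hp
    rw [HasAntidiagonal.mem_antidiagonal] at hp
    rw [psiqFam_single_tmul_single, tmul_smul, map_smul, twL_single_tmul, smul_smul,
      ← mul_assoc]
    rcases le_or_gt p.1 k with hik | hik
    · rcases le_or_gt p.2 k' with hjk | hjk
      · rw [show r + p.2 + p.1 = r + m by omega, show k - p.1 + (k' - p.2) = k + k' - m by omega,
          show l + p.1 + (l' + p.2) = l + l' + m by omega]
      · rw [psiCoeff_eq_zero_of_lt q hjk, zero_mul, zero_mul, zero_smul, zero_smul]
    · rw [psiCoeff_eq_zero_of_lt q hik, mul_zero, zero_mul, zero_smul, zero_smul]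
  rw [sum_congr rfl hterm, ← sum_smul, sum_psiCoeff_mul_psiCoeff_mul_pow, muq_single_single,
    ← smul_tmul', map_smul, psiqFam_single_tmul_single, smul_smul]

lemma psiqFam_single_tmul_single_mul_single (m k l r s : ℕ) :
    psiqFam q m (𝔞[k, l] ⊗ₜ (𝔟[r] * 𝔟[s]))
      = ∑ p ∈ antidiagonal m, twR (LinearMap.mul' ℂ Bpoly) (psiqFam q p.1)
          (psiqFam q p.2 (𝔞[k, l] ⊗ₜ 𝔟[r]) ⊗ₜ 𝔟[s]) := by
  have hterm : ∀ p ∈ antidiagonal m,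
      twR (LinearMap.mul' ℂ Bpoly) (psiqFam q p.1) (psiqFam q p.2 (𝔞[k, l] ⊗ₜ 𝔟[r]) ⊗ₜ 𝔟[s])
        = (psiCoeff q p.2 k l r * psiCoeff q p.1 (k - p.2) (l + p.2) s)
          • (𝔟[r + s + m] ⊗ₜ 𝔞[k - m, l + m]) := by
    intro p hp
    rw [HasAntidiagonal.mem_antidiagonal] at hp
    rw [psiqFam_single_tmul_single, ← smul_tmul', map_smul, twR_tmul_single, smul_smul,
      show r + p.2 + (s + p.1) = r + s + m by omega, show k - p.2 - p.1 = k - m by omega,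
      show l + p.2 + p.1 = l + m by omega]
  rw [sum_congr rfl hterm, ← sum_smul, sum_psiCoeff_mul_psiCoeff,
    AddMonoidAlgebra.single_mul_single, mul_one, psiqFam_single_tmul_single]

theorem psiqFam_muq_tmul (m : ℕ) (x y : Aq) (u : Bpoly) :
    psiqFam q m (muq q x y ⊗ₜ u)
      = ∑ i ∈ range (m + 1),
          twL (lift (muq q)) (psiqFam q i) (x ⊗ₜ psiqFam q (m - i) (y ⊗ₜ u)) := by
  rw [← Nat.sum_antidiagonal_eq_sum_range_succ
    (fun i j => twL (lift (muq q)) (psiqFam q i) (x ⊗ₜ psiqFam q j (y ⊗ₜ u)))]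
  have hmap : psiqFam q m ∘ₗ LinearMap.rTensor Bpoly (lift (muq q))
        ∘ₗ (TensorProduct.assoc ℂ Aq Aq Bpoly).symm.toLinearMap
      = ∑ p ∈ antidiagonal m,
          twL (lift (muq q)) (psiqFam q p.1) ∘ₗ LinearMap.lTensor Aq (psiqFam q p.2) := by
    ext ⟨k, l⟩ ⟨k', l'⟩ r
    simpa using psiqFam_muq_single_tmul_single q m k l k' l' r
  simpa using LinearMap.congr_fun hmap (x ⊗ₜ (y ⊗ₜ u))

theorem psiqFam_tmul_mul (m : ℕ) (x : Aq) (u v : Bpoly) :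
    psiqFam q m (x ⊗ₜ (u * v))
      = ∑ i ∈ range (m + 1),
          twR (LinearMap.mul' ℂ Bpoly) (psiqFam q i) (psiqFam q (m - i) (x ⊗ₜ u) ⊗ₜ v) := by
  rw [← Nat.sum_antidiagonal_eq_sum_range_succ
    (fun i j => twR (LinearMap.mul' ℂ Bpoly) (psiqFam q i) (psiqFam q j (x ⊗ₜ u) ⊗ₜ v))]
  have hmap : psiqFam q m ∘ₗ LinearMap.lTensor Aq (LinearMap.mul' ℂ Bpoly)
      = ∑ p ∈ antidiagonal m, twR (LinearMap.mul' ℂ Bpoly) (psiqFam q p.1)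
          ∘ₗ LinearMap.rTensor Bpoly (psiqFam q p.2)
          ∘ₗ (TensorProduct.assoc ℂ Aq Bpoly Bpoly).symm.toLinearMap := by
    ext ⟨k, l⟩ r s
    simpa using psiqFam_single_tmul_single_mul_single q m k l r s
  simpa using LinearMap.congr_fun hmap (x ⊗ₜ (u ⊗ₜ v))

end Twisting

theorem quantum_plane_all_orders_general (q : ℂ) :
    letI μA : Aq ⊗[ℂ] Aq →ₗ[ℂ] Aq := TensorProduct.lift (muq q)
    letI μB := LinearMap.mul' ℂ Bpoly
    ∀ m : ℕ, 1 ≤ m →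
      (∀ (x y : Aq) (u : Bpoly),
        psiqFam q m (muq q x y ⊗ₜ[ℂ] u)
          = ∑ i ∈ Finset.range (m + 1),
              twL μA (psiqFam q i) (x ⊗ₜ[ℂ] psiqFam q (m - i) (y ⊗ₜ[ℂ] u))) ∧
      (∀ (x : Aq) (u v : Bpoly),
        psiqFam q m (x ⊗ₜ[ℂ] (u * v))
          = ∑ i ∈ Finset.range (m + 1),
              twR μB (psiqFam q i) (psiqFam q (m - i) (x ⊗ₜ[ℂ] u) ⊗ₜ[ℂ] v)) :=
  fun m _ => ⟨psiqFam_muq_tmul q m, psiqFam_tmul_mul q m⟩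

/-- Example 3.4, deformation to all orders. -/
theorem quantum_plane_all_orders (q : ℂ) (hq : q ≠ 0)
    (hqroot : ∀ m : ℕ, 1 ≤ m → q ^ m ≠ 1) :
    letI μA : Aq ⊗[ℂ] Aq →ₗ[ℂ] Aq := TensorProduct.lift (muq q)
    letI μB := LinearMap.mul' ℂ Bpoly
    ∀ m : ℕ, 1 ≤ m →
      (∀ (x y : Aq) (u : Bpoly),
        psiqFam q m (muq q x y ⊗ₜ[ℂ] u)
          = ∑ i ∈ Finset.range (m + 1),
              twL μA (psiqFam q i) (x ⊗ₜ[ℂ] psiqFam q (m - i) (y ⊗ₜ[ℂ] u))) ∧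
      (∀ (x : Aq) (u v : Bpoly),
        psiqFam q m (x ⊗ₜ[ℂ] (u * v))
          = ∑ i ∈ Finset.range (m + 1),
              twR μB (psiqFam q i) (psiqFam q (m - i) (x ⊗ₜ[ℂ] u) ⊗ₜ[ℂ] v)) :=
  quantum_plane_all_orders_general q
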